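/- In the setting of the Stochastic Frank–Wolfe algorithm with gradient rescaling (feasible region C ⊆ ℝⁿ of L₂-diameter at most D, sample losses ℓ with ‖∇_θℓ(θ,ω)‖ ≤ G, M-smooth expected loss L, iterates θ_{t+1} = θ_t + η_t(v_t − θ_t) with η_t = ‖∇̃L(θ_t)‖·η ∈ [0,1], v_t ∈ argmin_{v∈C}⟨∇̃L(θ_t), v⟩, and i.i.d. batches of size b at each step), the following summed bound holds for every T ≥ 1: Σ_{t=0}^{T−1} 𝔼[η_t · 𝒢(θ_t)] ≤ (L(θ₀) − min_{θ∈C} L(θ)) + T D G² η / √b + T M D² G² η² / 2, where 𝒢(θ) = max_{v∈C} ⟨v − θ, −∇L(θ)⟩ is the Frank–Wolfe gap and the expectation is over the random batches. -/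

import Mathlib

/-!
Smoothness of `L` gives the descent inequality
`L θₜ₊₁ ≤ L θₜ + ηₜ ⟪∇L θₜ, vₜ - θₜ⟫ + M ηₜ² D² / 2`.
Since `vₜ` minimises `⟪∇̃L θₜ, ·⟫` over `C` instead of `⟪∇L θₜ, ·⟫`, the linear term is at most
`-ηₜ 𝒢(θₜ) + ηₜ D ‖∇̃L θₜ - ∇L θₜ‖`, and `ηₜ ≤ G η`. Summing over `t`, the losses telescope to at
most `L θ₀ - min_C L`, while the gradient error has expectation at most `G / √b`: the batch drawn at
step `t` is independent of `θₜ`, and the mean of `b` i.i.d. centred vectors whose second moment is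
at most `G²` has second moment at most `G² / b`.
-/

open MeasureTheory RealInnerProductSpace

section Smooth

variable {F : Type*} [NormedAddCommGroup F] [InnerProductSpace ℝ F] [CompleteSpace F]

theorem le_add_inner_add_sq_of_gradient_lipschitz {L : F → ℝ} {gradL : F → F}
    (hgradL : ∀ θ, HasGradientAt L (gradL θ) θ) {M : ℝ}
    (hsmooth : ∀ x y, ‖gradL x - gradL y‖ ≤ M * ‖x - y‖) (x y : F) :
    L y ≤ L x + ⟪gradL x, y - x⟫ + M / 2 * ‖y - x‖ ^ 2 := by
  set d := y - x
  -- `φ` is antitone on `[0, 1]`: its derivative is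
  -- `⟪gradL (x + s • d) - gradL x, d⟫ - M * s * ‖d‖ ^ 2 ≤ 0`
  let φ : ℝ → ℝ := fun s => L (x + s • d) - s * ⟪gradL x, d⟫ - M / 2 * s ^ 2 * ‖d‖ ^ 2
  have hφ : ∀ s,
      HasDerivAt φ (⟪gradL (x + s • d), d⟫ - ⟪gradL x, d⟫ - M * s * ‖d‖ ^ 2) s := by
    intro s
    have hline : HasDerivAt (fun s : ℝ => x + s • d) d s := by
      simpa using ((hasDerivAt_id s).smul_const d).const_add x
    have hL := (hgradL (x + s • d)).hasFDerivAt.comp_hasDerivAt s hline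
    rw [InnerProductSpace.toDual_apply_apply] at hL
    exact ((hL.sub ((hasDerivAt_id s).mul_const ⟪gradL x, d⟫)).sub
      (((hasDerivAt_pow 2 s).const_mul (M / 2)).mul_const (‖d‖ ^ 2))).congr_deriv
        (by push_cast; ring)
  have hanti : AntitoneOn φ (Set.Icc 0 1) := by
    refine antitoneOn_of_hasDerivWithinAt_nonpos (convex_Icc 0 1)
      (fun s _ => (hφ s).continuousAt.continuousWithinAt) (fun s _ => (hφ s).hasDerivWithinAt)
      fun s hs => ?_
    rw [interior_Icc] at hs
    have hlip : ⟪gradL (x + s • d) - gradL x, d⟫ ≤ M * s * ‖d‖ ^ 2 := calc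
      _ ≤ ‖gradL (x + s • d) - gradL x‖ * ‖d‖ := real_inner_le_norm _ _
      _ ≤ M * ‖x + s • d - x‖ * ‖d‖ := by gcongr; exact hsmooth _ _
      _ = M * s * ‖d‖ ^ 2 := by
        rw [add_sub_cancel_left, norm_smul, Real.norm_of_nonneg hs.1.le]; ring
    rw [inner_sub_left] at hlip
    linarith
  have h01 := hanti (by simp) (by simp) zero_le_one
  simp only [φ, zero_smul, add_zero, one_smul, zero_mul, sub_zero, one_mul, one_pow,
    add_sub_cancel, d] at h01 ⊢
  linarith

end Smooth

theorem hasGradientAt_integral_of_norm_le {E : Type*} [NormedAddCommGroup E]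
    [InnerProductSpace ℝ E] [CompleteSpace E] {Ω : Type*} [MeasurableSpace Ω] {μ : Measure Ω}
    [IsFiniteMeasure μ] {ℓ : E → Ω → ℝ} {gradℓ : E → Ω → E} (hint : ∀ θ, Integrable (ℓ θ) μ)
    (hdiff : ∀ θ ω, HasGradientAt (fun x => ℓ x ω) (gradℓ θ ω) θ)
    (hmeas : ∀ θ, AEStronglyMeasurable (gradℓ θ) μ) {G : ℝ} (hG : ∀ θ ω, ‖gradℓ θ ω‖ ≤ G)
    (θ : E) : HasGradientAt (fun x => ∫ ω, ℓ x ω ∂μ) (∫ ω, gradℓ θ ω ∂μ) θ := by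
  have hderiv := hasFDerivAt_integral_of_dominated_of_fderiv_le
    (F' := fun x ω => InnerProductSpace.toDual ℝ E (gradℓ x ω)) (bound := fun _ => G)
    (Metric.ball_mem_nhds θ one_pos) (.of_forall fun x => (hint x).1) (hint θ)
    ((InnerProductSpace.toDual ℝ E).continuous.comp_aestronglyMeasurable (hmeas θ))
    (.of_forall fun ω x _ => by simpa using hG x ω) (integrable_const G)
    (.of_forall fun ω x _ => (hdiff x ω).hasFDerivAt)
  have hcomm : ∫ ω, InnerProductSpace.toDual ℝ E (gradℓ θ ω) ∂μ
      = InnerProductSpace.toDual ℝ E (∫ ω, gradℓ θ ω ∂μ) :=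
    (InnerProductSpace.toDual ℝ E).toLinearIsometry.integral_comp_comm _
  rwa [hcomm] at hderiv

section FrankWolfe

variable {E : Type*} [NormedAddCommGroup E] [InnerProductSpace ℝ E] {C : Set E} {lmo : E → E}

noncomputable def frankWolfeGap (C : Set E) (g x : E) : ℝ := sSup ((fun u => ⟪u - x, -g⟫) '' C)

theorem frankWolfeGap_eq (hlmo : ∀ y, lmo y ∈ C) (hmin : ∀ y, ∀ u ∈ C, ⟪y, lmo y⟫ ≤ ⟪y, u⟫)
    (g x : E) : frankWolfeGap C g x = ⟪lmo g - x, -g⟫ := by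
  refine IsGreatest.csSup_eq ⟨⟨lmo g, hlmo g, rfl⟩, ?_⟩
  rintro _ ⟨u, hu, rfl⟩
  simp only [inner_neg_right, real_inner_comm g, inner_sub_right]
  linarith [hmin g u hu]

theorem frankWolfeGap_nonneg (hlmo : ∀ y, lmo y ∈ C) (hmin : ∀ y, ∀ u ∈ C, ⟪y, lmo y⟫ ≤ ⟪y, u⟫)
    (g : E) {x : E} (hx : x ∈ C) : 0 ≤ frankWolfeGap C g x := by
  rw [frankWolfeGap_eq hlmo hmin, inner_neg_right, inner_sub_left, real_inner_comm g,
    real_inner_comm g]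
  linarith [hmin g x hx]

theorem mul_frankWolfeGap_le [CompleteSpace E] (hlmo : ∀ y, lmo y ∈ C)
    (hmin : ∀ y, ∀ u ∈ C, ⟪y, lmo y⟫ ≤ ⟪y, u⟫) {D : ℝ} (hD : 0 ≤ D)
    (hdiam : ∀ x ∈ C, ∀ y ∈ C, ‖x - y‖ ≤ D) {L : E → ℝ} {gradL : E → E}
    (hgradL : ∀ θ, HasGradientAt L (gradL θ) θ) {M : ℝ} (hM : 0 ≤ M)
    (hsmooth : ∀ x y, ‖gradL x - gradL y‖ ≤ M * ‖x - y‖) {x : E} (hx : x ∈ C) (g : E)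
    {γ Γ : ℝ} (hγ : 0 ≤ γ) (hγΓ : γ ≤ Γ) :
    γ * frankWolfeGap C (gradL x) x ≤ L x - L (x + γ • (lmo g - x))
      + Γ * D * ‖g - gradL x‖ + M / 2 * Γ ^ 2 * D ^ 2 := by
  set d := gradL x
  set u := lmo d
  set v := lmo g
  have hdesc := le_add_inner_add_sq_of_gradient_lipschitz hgradL hsmooth x (x + γ • (v - x))
  rw [add_sub_cancel_left, inner_smul_right, norm_smul, Real.norm_of_nonneg hγ] at hdesc
  -- `v` minimises `⟪g, ·⟫` rather than `⟪d, ·⟫`; the difference costs `‖g - d‖ * ‖v - u‖`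
  have hgap : ⟪u - x, -d⟫ ≤ ⟪d, x - v⟫ + D * ‖g - d‖ := by
    have hgv : ⟪g, v⟫ ≤ ⟪g, u⟫ := hmin g u (hlmo d)
    have hcs : ⟪d - g, v - u⟫ ≤ ‖g - d‖ * D := by
      rw [← norm_neg (g - d), neg_sub]
      exact (real_inner_le_norm _ _).trans
        (mul_le_mul_of_nonneg_left (hdiam _ (hlmo g) _ (hlmo d)) (norm_nonneg _))
    simp only [inner_sub_left, inner_sub_right, inner_neg_right, real_inner_comm d] at hcs ⊢
    linarith
  have hvx : ‖v - x‖ ≤ D := hdiam _ (hlmo g) _ hx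
  rw [frankWolfeGap_eq hlmo hmin]
  calc γ * ⟪u - x, -d⟫ ≤ γ * ⟪d, x - v⟫ + γ * D * ‖g - d‖ := by nlinarith
    _ ≤ L x - L (x + γ • (v - x)) + M / 2 * (γ * ‖v - x‖) ^ 2 + Γ * D * ‖g - d‖ := by
        rw [← neg_sub v x, inner_neg_right]
        gcongr
        linarith
    _ ≤ L x - L (x + γ • (v - x)) + Γ * D * ‖g - d‖ + M / 2 * Γ ^ 2 * D ^ 2 := by
        have : (γ * ‖v - x‖) ^ 2 ≤ Γ ^ 2 * D ^ 2 := by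
          rw [← mul_pow]; gcongr; linarith
        nlinarith

end FrankWolfe

section SampleMean

variable {E : Type*} [NormedAddCommGroup E] [NormedSpace ℝ E] {Ω : Type*}

noncomputable def sampleMean {b : ℕ} (X : Ω → E) (w : Fin b → Ω) : E :=
  (b : ℝ)⁻¹ • ∑ j, X (w j)

theorem norm_sampleMean_le {b : ℕ} (hb : b ≠ 0) {X : Ω → E} {G : ℝ} (hG : ∀ ω, ‖X ω‖ ≤ G)
    (w : Fin b → Ω) : ‖sampleMean X w‖ ≤ G := by
  have hb' : (0 : ℝ) < b := by positivity
  calc ‖sampleMean X w‖ ≤ (b : ℝ)⁻¹ * ∑ j, ‖X (w j)‖ := by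
        rw [sampleMean, norm_smul_of_nonneg (by positivity)]; gcongr; exact norm_sum_le _ _
    _ ≤ (b : ℝ)⁻¹ * (b * G) := by
        gcongr; simpa using Finset.sum_le_sum fun j (_ : j ∈ Finset.univ) => hG (w j)
    _ = G := by field_simp

theorem norm_sub_integral_le [MeasurableSpace Ω] {μ : Measure Ω} [IsProbabilityMeasure μ]
    {X : Ω → E} {G : ℝ} (hG : ∀ ω, ‖X ω‖ ≤ G) {x : E} (hx : ‖x‖ ≤ G) :
    ‖x - ∫ ω, X ω ∂μ‖ ≤ 2 * G := by
  have hm : ‖∫ ω, X ω ∂μ‖ ≤ G := by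
    simpa using norm_integral_le_of_norm_le_const (μ := μ) (.of_forall hG)
  linarith [norm_sub_le x (∫ ω, X ω ∂μ)]

variable [MeasurableSpace Ω] [MeasurableSpace E] [BorelSpace E] [SecondCountableTopology E]
  {ι E' : Type*} [MeasurableSpace E'] {b : ℕ} {X : E' → Ω → E} {θ : (ι → Fin b → Ω) → E'}

theorem measurable_sampleMean (hX : Measurable fun p : E' × Ω => X p.1 p.2) :
    Measurable fun p : E' × (Fin b → Ω) => sampleMean (X p.1) p.2 :=
  (Finset.univ.measurable_fun_sum fun j _ =>
    hX.comp (measurable_fst.prodMk ((measurable_pi_apply j).comp measurable_snd))).const_smul _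

theorem measurable_norm_sampleMean_sub_integral (μ : Measure Ω) [SFinite μ]
    (hX : Measurable fun p : E' × Ω => X p.1 p.2) (hθ : Measurable θ) (t : ι) :
    Measurable fun ws => ‖sampleMean (X (θ ws)) (ws t) - ∫ ω, X (θ ws) ω ∂μ‖ :=
  (((measurable_sampleMean hX).comp (hθ.prodMk (measurable_pi_apply t))).sub
    ((hX.stronglyMeasurable.integral_prod_right' (ν := μ)).measurable.comp hθ)).norm

theorem integrable_norm_sampleMean_sub_integral [Fintype ι] (μ : Measure Ω)
    [IsProbabilityMeasure μ] (hb : b ≠ 0) (hX : Measurable fun p : E' × Ω => X p.1 p.2)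
    {G : ℝ} (hG : ∀ x ω, ‖X x ω‖ ≤ G) (hθ : Measurable θ) (t : ι) :
    Integrable (fun ws => ‖sampleMean (X (θ ws)) (ws t) - ∫ ω, X (θ ws) ω ∂μ‖)
      (Measure.pi fun _ : ι => Measure.pi fun _ : Fin b => μ) :=
  .of_bound (measurable_norm_sampleMean_sub_integral μ hX hθ t).aestronglyMeasurable (2 * G)
    (.of_forall fun _ => (norm_norm _).trans_le
      (norm_sub_integral_le (hG _) (norm_sampleMean_le hb (hG _) _)))

end SampleMean

theorem sq_integral_le_integral_sq {Ω : Type*} [MeasurableSpace Ω] {μ : Measure Ω}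
    [IsProbabilityMeasure μ] {Z : Ω → ℝ} (hZ : MemLp Z 2 μ) :
    (∫ ω, Z ω ∂μ) ^ 2 ≤ ∫ ω, Z ω ^ 2 ∂μ := by
  have hvar := ProbabilityTheory.variance_nonneg Z μ
  rw [ProbabilityTheory.variance_eq_sub hZ] at hvar
  simpa using hvar

section Variance

variable {E : Type*} [NormedAddCommGroup E] [InnerProductSpace ℝ E] [CompleteSpace E]
  {Ω : Type*} [MeasurableSpace Ω] {μ : Measure Ω} [IsProbabilityMeasure μ]
  {X : Ω → E} {G : ℝ}

theorem integral_norm_sub_integral_sq_le (hX : AEStronglyMeasurable X μ)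
    (hG : ∀ ω, ‖X ω‖ ≤ G) : ∫ ω, ‖X ω - ∫ ω', X ω' ∂μ‖ ^ 2 ∂μ ≤ G ^ 2 := by
  set m := ∫ ω, X ω ∂μ
  have hXint : Integrable X μ := .of_bound hX G (.of_forall hG)
  have hsq : Integrable (fun ω => ‖X ω‖ ^ 2) μ :=
    .of_bound (hX.norm.pow 2) (G ^ 2) (.of_forall fun ω => by
      rw [Real.norm_of_nonneg (by positivity)]; exact pow_le_pow_left₀ (norm_nonneg _) (hG ω) 2)
  have hinner : Integrable (fun ω => 2 * ⟪m, X ω⟫) μ := (hXint.const_inner m).const_mul 2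
  calc ∫ ω, ‖X ω - m‖ ^ 2 ∂μ = ∫ ω, ‖X ω‖ ^ 2 - 2 * ⟪m, X ω⟫ + ‖m‖ ^ 2 ∂μ := by
        congr with ω; rw [norm_sub_sq_real, real_inner_comm]
    _ = ∫ ω, ‖X ω‖ ^ 2 ∂μ - ‖m‖ ^ 2 := by
        rw [integral_add (f := fun ω => ‖X ω‖ ^ 2 - 2 * ⟪m, X ω⟫) (hsq.sub hinner)
            (integrable_const _), integral_sub hsq hinner,
          integral_const_mul, integral_inner hXint, real_inner_self_eq_norm_sq]
        simp only [integral_const, probReal_univ, one_smul]; ring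
    _ ≤ ∫ _ω, G ^ 2 ∂μ := by
        have := integral_mono hsq (integrable_const _) fun ω =>
          pow_le_pow_left₀ (norm_nonneg _) (hG ω) 2
        nlinarith [sq_nonneg ‖m‖]
    _ = G ^ 2 := by simp

theorem integral_norm_sum_sq_of_integral_eq_zero {ι : Type*} [Fintype ι]
    (hX : AEStronglyMeasurable X μ) (hG : ∀ ω, ‖X ω‖ ≤ G) (hX0 : ∫ ω, X ω ∂μ = 0) :
    ∫ w, ‖∑ j, X (w j)‖ ^ 2 ∂Measure.pi (fun _ : ι => μ)
      = Fintype.card ι * ∫ ω, ‖X ω‖ ^ 2 ∂μ := by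
  classical
  set π := Measure.pi fun _ : ι => μ
  have hXj : ∀ j : ι, AEStronglyMeasurable (fun w : ι → Ω => X (w j)) π :=
    fun j => hX.comp_measurePreserving (measurePreserving_eval _ j)
  have hint : ∀ j k : ι, Integrable (fun w : ι → Ω => ⟪X (w j), X (w k)⟫) π :=
    fun j k => .of_bound ((hXj j).inner (hXj k)) (G * G) (.of_forall fun w =>
      (norm_inner_le_norm _ _).trans (mul_le_mul (hG _) (hG _) (norm_nonneg _)
        ((norm_nonneg _).trans (hG (w j)))))
  -- distinct coordinates are independent, so the cross terms vanish
  have hcross : ∀ j k : ι,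
      ∫ w, ⟪X (w j), X (w k)⟫ ∂π = if j = k then ∫ ω, ‖X ω‖ ^ 2 ∂μ else 0 := by
    intro j k
    split_ifs with hjk
    · subst hjk
      simp_rw [real_inner_self_eq_norm_sq]
      exact integral_comp_eval (μ := fun _ => μ) (f := fun ω => ‖X ω‖ ^ 2) (hX.norm.pow 2)
    · have hind : ProbabilityTheory.IndepFun (fun w : ι → Ω => w j) (fun w => w k) π :=
        (ProbabilityTheory.iIndepFun_pi (X := fun _ : ι => id) fun _ => aemeasurable_id).indepFun
          hjk
      have hXint : ∀ i : ι, Integrable X (Measure.map (fun w : ι → Ω => w i) π) := fun i => by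
        rw [(measurePreserving_eval _ i).map_eq]; exact .of_bound hX G (.of_forall hG)
      refine (hind.integral_bilin_comp_comp (measurable_pi_apply j).aemeasurable
        (measurable_pi_apply k).aemeasurable (hXint j) (hXint k) (innerSL ℝ)).trans ?_
      rw [integral_comp_eval hX, hX0, map_zero, zero_apply]
  calc ∫ w, ‖∑ j, X (w j)‖ ^ 2 ∂π = ∑ j, ∑ k, ∫ w, ⟪X (w j), X (w k)⟫ ∂π := by
        simp_rw [← real_inner_self_eq_norm_sq, sum_inner, inner_sum]
        rw [integral_finsetSum _ fun j _ => integrable_finsetSum _ fun k _ => hint j k]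
        exact Finset.sum_congr rfl fun j _ => integral_finsetSum _ fun k _ => hint j k
    _ = Fintype.card ι * ∫ ω, ‖X ω‖ ^ 2 ∂μ := by simp [hcross]

variable {b : ℕ}

theorem integral_norm_sampleMean_sub_integral_sq_le (hb : b ≠ 0)
    (hX : AEStronglyMeasurable X μ) (hG : ∀ ω, ‖X ω‖ ≤ G) :
    ∫ w, ‖sampleMean X w - ∫ ω, X ω ∂μ‖ ^ 2 ∂Measure.pi (fun _ : Fin b => μ) ≤ G ^ 2 / b := by
  set m := ∫ ω, X ω ∂μ
  have hmean : ∀ w : Fin b → Ω, ‖sampleMean X w - m‖ = (b : ℝ)⁻¹ * ‖∑ j, (X (w j) - m)‖ := by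
    intro w
    rw [Finset.sum_sub_distrib, Finset.sum_const, Finset.card_univ, Fintype.card_fin,
      ← Nat.cast_smul_eq_nsmul ℝ, sampleMean, ← norm_smul_of_nonneg (by positivity), smul_sub,
      smul_smul, inv_mul_cancel₀ (Nat.cast_ne_zero.2 hb), one_smul]
  have hY0 : ∫ ω, (X ω - m) ∂μ = 0 := by
    rw [integral_sub (.of_bound hX G (.of_forall hG)) (integrable_const m)]; simp [m]
  simp_rw [hmean, mul_pow]
  rw [integral_const_mul, integral_norm_sum_sq_of_integral_eq_zero
    (X := fun ω => X ω - m) (hX.sub aestronglyMeasurable_const) (G := 2 * G)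
    (fun ω => norm_sub_integral_le hG (hG ω)) hY0, Fintype.card_fin]
  calc ((b : ℝ)⁻¹) ^ 2 * (b * ∫ ω, ‖X ω - m‖ ^ 2 ∂μ) = (∫ ω, ‖X ω - m‖ ^ 2 ∂μ) / b := by
        field_simp
    _ ≤ G ^ 2 / b := by gcongr; exact integral_norm_sub_integral_sq_le hX hG

theorem integral_norm_sampleMean_sub_integral_le (hb : b ≠ 0) (hX : AEStronglyMeasurable X μ)
    (hG : ∀ ω, ‖X ω‖ ≤ G) :
    ∫ w, ‖sampleMean X w - ∫ ω, X ω ∂μ‖ ∂Measure.pi (fun _ : Fin b => μ) ≤ G / √b := by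
  obtain ⟨ω₀⟩ := nonempty_of_isProbabilityMeasure μ
  have hG0 : 0 ≤ G := (norm_nonneg _).trans (hG ω₀)
  have hXj : ∀ j, AEStronglyMeasurable (fun w : Fin b → Ω => X (w j)) (Measure.pi fun _ => μ) :=
    fun j => hX.comp_measurePreserving (measurePreserving_eval _ j)
  have hZ : MemLp (fun w => ‖sampleMean X w - ∫ ω, X ω ∂μ‖) 2 (Measure.pi fun _ : Fin b => μ) :=
    .of_bound ((((Finset.univ.aestronglyMeasurable_fun_sum fun j _ => hXj j).const_smul _).sub
      aestronglyMeasurable_const).norm) (2 * G)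
      (.of_forall fun w =>
        (norm_norm _).trans_le (norm_sub_integral_le hG (norm_sampleMean_le hb hG w)))
  rw [← Real.sqrt_sq hG0, ← Real.sqrt_div' _ (Nat.cast_nonneg b)]
  exact Real.le_sqrt_of_sq_le ((sq_integral_le_integral_sq hZ).trans
    (integral_norm_sampleMean_sub_integral_sq_le hb hX hG))

end Variance

theorem integral_pi_le_of_forall_integral_update_le {ι : Type*} [Fintype ι] [DecidableEq ι]
    {α : ι → Type*} [∀ i, MeasurableSpace (α i)] {μ : ∀ i, Measure (α i)}
    [∀ i, IsProbabilityMeasure (μ i)] {F : (∀ i, α i) → ℝ} (hF : Measurable F)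
    (hF0 : ∀ x, 0 ≤ F x) {B : ℝ} (hFB : ∀ x, F x ≤ B) (i : ι) {c : ℝ}
    (hc : ∀ x, ∫ a, F (Function.update x i a) ∂μ i ≤ c) :
    ∫ x, F x ∂Measure.pi μ ≤ c := by
  have hint : ∀ x, Integrable (fun a => F (Function.update x i a)) (μ i) := fun x =>
    .of_bound (hF.comp (measurable_update x)).aestronglyMeasurable B
      (.of_forall fun a => by rw [Real.norm_of_nonneg (hF0 _)]; exact hFB _)
  have hc0 : 0 ≤ c := by
    obtain ⟨x⟩ : Nonempty (∀ i, α i) := ⟨fun i => (nonempty_of_isProbabilityMeasure (μ i)).some⟩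
    exact (integral_nonneg fun a => hF0 _).trans (hc x)
  have hlin : ∫⁻ x, ENNReal.ofReal (F x) ∂Measure.pi μ
      ≤ ∫⁻ _x, ENNReal.ofReal c ∂Measure.pi μ := by
    refine lintegral_le_of_lmarginal_le {i} hF.ennreal_ofReal measurable_const fun x => ?_
    simp only [lmarginal_singleton, lintegral_const, measure_univ, mul_one]
    rw [← ofReal_integral_eq_lintegral_ofReal (hint x) (.of_forall fun a => hF0 _)]
    exact ENNReal.ofReal_le_ofReal (hc x)
  rw [lintegral_const, measure_univ, mul_one] at hlin
  rw [integral_eq_lintegral_of_nonneg_ae (.of_forall hF0) hF.aestronglyMeasurable]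
  exact ENNReal.toReal_le_of_le_ofReal hc0 hlin

theorem integral_norm_sampleMean_sub_integral_le_of_update_eq {E : Type*}
    [NormedAddCommGroup E] [InnerProductSpace ℝ E] [CompleteSpace E] [MeasurableSpace E]
    [BorelSpace E] [SecondCountableTopology E] {Ω : Type*} [MeasurableSpace Ω] (μ : Measure Ω)
    [IsProbabilityMeasure μ] {ι E' : Type*} [Fintype ι] [DecidableEq ι] [MeasurableSpace E']
    {b : ℕ} (hb : b ≠ 0) {X : E' → Ω → E} (hX : Measurable fun p : E' × Ω => X p.1 p.2) {G : ℝ}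
    (hG : ∀ x ω, ‖X x ω‖ ≤ G) {θ : (ι → Fin b → Ω) → E'} (hθ : Measurable θ) (t : ι)
    (hθt : ∀ ws a, θ (Function.update ws t a) = θ ws) :
    ∫ ws, ‖sampleMean (X (θ ws)) (ws t) - ∫ ω, X (θ ws) ω ∂μ‖
      ∂Measure.pi (fun _ : ι => Measure.pi fun _ : Fin b => μ) ≤ G / √b := by
  refine integral_pi_le_of_forall_integral_update_le
    (measurable_norm_sampleMean_sub_integral μ hX hθ t) (fun _ => norm_nonneg _)
    (fun _ => norm_sub_integral_le (hG _) (norm_sampleMean_le hb (hG _) _)) t fun ws => ?_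
  simp only [hθt, Function.update_self]
  exact integral_norm_sampleMean_sub_integral_le hb
    (hX.comp measurable_prodMk_left).aestronglyMeasurable (hG (θ ws))

section Iterates

variable {β E : Type*} {T : ℕ} {θ : ℕ → (Fin T → β) → E}

theorem iterate_mem {C : Set E} (h0 : ∀ ws, θ 0 ws ∈ C)
    (hstep : ∀ (t : Fin T) ws, θ t ws ∈ C → θ (t + 1) ws ∈ C) {k : ℕ} (hk : k ≤ T)
    (ws : Fin T → β) : θ k ws ∈ C := by
  induction k with
  | zero => exact h0 ws
  | succ k ih => exact hstep ⟨k, hk⟩ ws (ih (by omega))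

variable {Φ : E → β → E}

theorem iterate_eq_of_forall_lt_eq (hstep : ∀ (t : Fin T) ws, θ (t + 1) ws = Φ (θ t ws) (ws t))
    (h0 : ∀ ws ws', θ 0 ws = θ 0 ws') {k : ℕ} (hk : k ≤ T) {ws ws' : Fin T → β}
    (h : ∀ s : Fin T, (s : ℕ) < k → ws s = ws' s) : θ k ws = θ k ws' := by
  induction k with
  | zero => exact h0 ws ws'
  | succ k ih =>
    rw [show k + 1 = ((⟨k, hk⟩ : Fin T) : ℕ) + 1 from rfl, hstep, hstep,
      ih (by omega) fun s hs => h s (by omega), h ⟨k, hk⟩ (by simp)]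

theorem measurable_iterate [MeasurableSpace β] [MeasurableSpace E]
    (hstep : ∀ (t : Fin T) ws, θ (t + 1) ws = Φ (θ t ws) (ws t)) (h0 : Measurable (θ 0))
    (hΦ : Measurable (Function.uncurry Φ)) {k : ℕ} (hk : k ≤ T) : Measurable (θ k) := by
  induction k with
  | zero => exact h0
  | succ k ih =>
    rw [show θ (k + 1) = fun ws => Φ (θ k ws) (ws ⟨k, hk⟩) from funext (hstep ⟨k, hk⟩)]
    exact hΦ.comp ((ih (by omega)).prodMk (measurable_pi_apply _))

end Iterates

theorem sum_integral_le_of_descent {β : Type*} [MeasurableSpace β] {μ : Measure β}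
    [IsProbabilityMeasure μ] {T : ℕ} {f e : Fin T → β → ℝ} {a : ℕ → β → ℝ} {c K A A' ε : ℝ}
    (hf0 : ∀ t x, 0 ≤ f t x) (hf : ∀ t x, f t x ≤ a t x - a (t + 1) x + c * e t x + K)
    (ha : ∀ k ≤ T, Integrable (a k) μ) (he : ∀ t, Integrable (e t) μ)
    (ha0 : ∀ x, a 0 x ≤ A) (haT : ∀ x, A' ≤ a T x) (hc : 0 ≤ c)
    (hε : ∀ t, ∫ x, e t x ∂μ ≤ ε) :
    ∑ t, ∫ x, f t x ∂μ ≤ (A - A') + T * (c * ε) + T * K := by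
  have hat : ∀ t : Fin T, Integrable (a t) μ := fun t => ha t t.2.le
  have hat' : ∀ t : Fin T, Integrable (a (t + 1)) μ := fun t => ha (t + 1) t.2
  have hstep : ∀ t : Fin T,
      ∫ x, f t x ∂μ ≤ (∫ x, a t x ∂μ - ∫ x, a (t + 1) x ∂μ) + c * ε + K := fun t => calc
    ∫ x, f t x ∂μ ≤ ∫ x, a t x - a (t + 1) x + c * e t x + K ∂μ :=
      integral_mono_of_nonneg (.of_forall (hf0 t)) ((((hat t).sub (hat' t)).add
        ((he t).const_mul c)).add (integrable_const K)) (.of_forall (hf t))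
    _ = (∫ x, a t x ∂μ - ∫ x, a (t + 1) x ∂μ) + c * ∫ x, e t x ∂μ + K := by
      rw [integral_add (f := fun x => a t x - a (t + 1) x + c * e t x)
          (((hat t).sub (hat' t)).add ((he t).const_mul c)) (integrable_const K),
        integral_add (f := fun x => a t x - a (t + 1) x) ((hat t).sub (hat' t))
          ((he t).const_mul c), integral_sub (hat t) (hat' t), integral_const_mul]
      simp
    _ ≤ (∫ x, a t x ∂μ - ∫ x, a (t + 1) x ∂μ) + c * ε + K := by gcongr; exact hε t
  have htelescope : ∑ t : Fin T, (∫ x, a t x ∂μ - ∫ x, a (t + 1) x ∂μ)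
      = ∫ x, a 0 x ∂μ - ∫ x, a T x ∂μ :=
    (Fin.sum_univ_eq_sum_range (fun k => ∫ x, a k x ∂μ - ∫ x, a (k + 1) x ∂μ) T).trans
      (Finset.sum_range_sub' _ T)
  have h0 : ∫ x, a 0 x ∂μ ≤ A := by
    simpa using integral_mono (ha 0 (Nat.zero_le T)) (integrable_const A) ha0
  have hT : A' ≤ ∫ x, a T x ∂μ := by
    simpa using integral_mono (integrable_const A') (ha T le_rfl) haT
  calc ∑ t, ∫ x, f t x ∂μ
      ≤ ∑ t : Fin T, ((∫ x, a t x ∂μ - ∫ x, a (t + 1) x ∂μ) + c * ε + K) :=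
        Finset.sum_le_sum fun t _ => hstep t
    _ = (∫ x, a 0 x ∂μ - ∫ x, a T x ∂μ) + T * (c * ε) + T * K := by
        simp only [Finset.sum_add_distrib, htelescope, Finset.sum_const, Finset.card_univ,
          Fintype.card_fin, nsmul_eq_mul]
    _ ≤ (A - A') + T * (c * ε) + T * K := by linarith

theorem sfw_gradient_rescaling_summed_bound_general (n : ℕ)
    (C : Set (EuclideanSpace ℝ (Fin n)))
    (hconv : Convex ℝ C) (hcomp : IsCompact C)
    (D : ℝ) (hD : 0 ≤ D) (hdiam : ∀ x ∈ C, ∀ y ∈ C, ‖x - y‖ ≤ D)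
    (Ω : Type*) [MeasurableSpace Ω] (ℙ : Measure Ω) [IsProbabilityMeasure ℙ]
    (ℓ : EuclideanSpace ℝ (Fin n) → Ω → ℝ)
    (gradℓ : EuclideanSpace ℝ (Fin n) → Ω → EuclideanSpace ℝ (Fin n))
    (hdiff : ∀ θ ω, HasGradientAt (fun x => ℓ x ω) (gradℓ θ ω) θ)
    (hgradmeas : Measurable fun p : EuclideanSpace ℝ (Fin n) × Ω => gradℓ p.1 p.2)
    (G : ℝ) (hGbound : ∀ θ ω, ‖gradℓ θ ω‖ ≤ G)
    (hint : ∀ θ, Integrable (ℓ θ) ℙ)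
    (L : EuclideanSpace ℝ (Fin n) → ℝ)
    (hL : ∀ θ, L θ = ∫ ω, ℓ θ ω ∂ℙ)
    (gradL : EuclideanSpace ℝ (Fin n) → EuclideanSpace ℝ (Fin n))
    (hgradL : ∀ θ, HasGradientAt L (gradL θ) θ)
    (M : ℝ) (hM : 0 ≤ M)
    (hsmooth : ∀ x y, ‖gradL x - gradL y‖ ≤ M * ‖x - y‖)
    (T b : ℕ) (hb : 1 ≤ b)
    (θ0 : EuclideanSpace ℝ (Fin n)) (hθ0C : θ0 ∈ C)
    (η : ℝ) (hη0 : 0 ≤ η)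
    (vsel : EuclideanSpace ℝ (Fin n) → EuclideanSpace ℝ (Fin n))
    (hvselC : ∀ y, vsel y ∈ C)
    (hvselmin : ∀ y, ∀ u ∈ C, ⟪y, vsel y⟫ ≤ ⟪y, u⟫)
    (hvselmeas : Measurable vsel)
    (gbatch : Fin T → (Fin T → Fin b → Ω) → EuclideanSpace ℝ (Fin n))
    (θit : ℕ → (Fin T → Fin b → Ω) → EuclideanSpace ℝ (Fin n))
    (hθinit : ∀ ws, θit 0 ws = θ0)
    (hgbatch : ∀ (t : Fin T) ws,
      gbatch t ws = (b : ℝ)⁻¹ • ∑ j : Fin b, gradℓ (θit t ws) (ws t j))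
    (hstep01 : ∀ (t : Fin T) ws, ‖gbatch t ws‖ * η ∈ Set.Icc (0 : ℝ) 1)
    (hrec : ∀ (t : Fin T) ws,
      θit ((t : ℕ) + 1) ws =
        θit t ws + (‖gbatch t ws‖ * η) • (vsel (gbatch t ws) - θit t ws)) :
    (∑ t : Fin T,
        ∫ ws : Fin T → Fin b → Ω,
          (‖gbatch t ws‖ * η) *
            sSup ((fun u => ⟪u - θit t ws, -gradL (θit t ws)⟫) '' C)
          ∂(Measure.pi fun _ : Fin T => Measure.pi fun _ : Fin b => ℙ))
      ≤ (L θ0 - sInf (L '' C)) + T * D * G ^ 2 * η / Real.sqrt b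
        + T * M * D ^ 2 * G ^ 2 * η ^ 2 / 2 := by
  obtain ⟨ω₀⟩ := nonempty_of_isProbabilityMeasure ℙ
  have hG0 : 0 ≤ G := (norm_nonneg _).trans (hGbound θ0 ω₀)
  have hb0 : b ≠ 0 := by omega
  have hgradL_eq : ∀ θ, gradL θ = ∫ ω, gradℓ θ ω ∂ℙ := fun θ => (hgradL θ).unique <| by
    simpa only [← funext hL] using hasGradientAt_integral_of_norm_le hint hdiff
      (fun θ => (hgradmeas.comp measurable_prodMk_left).aestronglyMeasurable) hGbound θ
  have hLcont : Continuous L :=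
    continuous_iff_continuousAt.2 fun x => (hgradL x).differentiableAt.continuousAt
  obtain ⟨R, hR⟩ := hcomp.exists_bound_of_continuousOn hLcont.continuousOn
  have hbatch : ∀ t ws, gbatch t ws = sampleMean (gradℓ (θit t ws)) (ws t) := hgbatch
  set Φ := fun x (w : Fin b → Ω) =>
    x + (‖sampleMean (gradℓ x) w‖ * η) • (vsel (sampleMean (gradℓ x) w) - x)
  have hstep : ∀ (t : Fin T) ws, θit (t + 1) ws = Φ (θit t ws) (ws t) := fun t ws => by
    rw [hrec, hbatch]
  have hmem : ∀ k ≤ T, ∀ ws, θit k ws ∈ C := fun k hk =>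
    iterate_mem (fun ws => hθinit ws ▸ hθ0C)
      (fun t ws h => hrec t ws ▸ hconv.add_smul_sub_mem h (hvselC _) (hstep01 t ws)) hk
  have hmeas : ∀ k ≤ T, Measurable (θit k) := by
    have hS := measurable_sampleMean (b := b) hgradmeas
    refine fun k hk => measurable_iterate hstep (by rw [funext hθinit]; exact measurable_const)
      ?_ hk
    exact measurable_fst.add ((hS.norm.mul_const η).smul ((hvselmeas.comp hS).sub measurable_fst))
  have hθt : ∀ (t : Fin T) ws a, θit t (Function.update ws t a) = θit t ws := fun t ws a =>
    iterate_eq_of_forall_lt_eq hstep (fun ws ws' => by rw [hθinit, hθinit]) t.2.le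
      fun s hs => Function.update_of_ne (Fin.ne_of_lt hs) _ _
  have herr_int : ∀ t : Fin T, Integrable (fun ws => ‖gbatch t ws - gradL (θit t ws)‖)
      (Measure.pi fun _ : Fin T => Measure.pi fun _ : Fin b => ℙ) := fun t => by
    simpa only [hbatch, hgradL_eq] using
      integrable_norm_sampleMean_sub_integral ℙ hb0 hgradmeas hGbound (hmeas t t.2.le) t
  have herr : ∀ t : Fin T, ∫ ws, ‖gbatch t ws - gradL (θit t ws)‖
      ∂(Measure.pi fun _ : Fin T => Measure.pi fun _ : Fin b => ℙ) ≤ G / √b := fun t => by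
    simpa only [hbatch, hgradL_eq] using integral_norm_sampleMean_sub_integral_le_of_update_eq
      ℙ hb0 hgradmeas hGbound (hmeas t t.2.le) t (hθt t)
  refine (sum_integral_le_of_descent (a := fun k ws => L (θit k ws))
    (e := fun t ws => ‖gbatch t ws - gradL (θit t ws)‖) (c := G * η * D)
    (K := M / 2 * (G * η) ^ 2 * D ^ 2) (A := L θ0) (A' := sInf (L '' C)) (ε := G / √b)
    (fun t ws => mul_nonneg (hstep01 t ws).1
      (frankWolfeGap_nonneg hvselC hvselmin _ (hmem t t.2.le ws)))
    (fun t ws => ?_)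
    (fun k hk => .of_bound (hLcont.measurable.comp (hmeas k hk)).aestronglyMeasurable R
      (.of_forall fun ws => hR _ (hmem k hk ws)))
    herr_int
    (fun ws => (hθinit ws).symm ▸ le_rfl)
    (fun ws => csInf_le (hcomp.image hLcont).bddBelow ⟨_, hmem T le_rfl ws, rfl⟩)
    (by positivity) herr).trans_eq (by ring)
  simp only [hrec t ws]
  exact mul_frankWolfeGap_le hvselC hvselmin hD hdiam hgradL hM hsmooth (hmem t t.2.le ws) _
    (hstep01 t ws).1 (mul_le_mul_of_nonneg_right
      (hbatch t ws ▸ norm_sampleMean_le hb0 (hGbound _) _) hη0)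

/-- summed per-step bound for Stochastic Frank–Wolfe with
gradient rescaling. The T i.i.d. batches of size b are modeled by the product
probability measure on (Fin T → Fin b → Ω); `θit t` is the t-th iterate as a
function of the sample path, `vsel` is a (measurable) linear minimization
oracle over C, `gbatch t` is the batch gradient at step t, and the step size is
η_t = ‖∇̃L(θ_t)‖·η ∈ [0,1]. The conclusion is
Σ_{t=0}^{T−1} 𝔼[η_t 𝒢(θ_t)] ≤ (L(θ₀) − min_C L) + T D G² η/√b + T M D² G² η²/2,
with the Frank–Wolfe gap 𝒢(θ) = max_{u∈C}⟨u − θ, −∇L(θ)⟩ written as an sSup. -/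
theorem sfw_gradient_rescaling_summed_bound (n : ℕ)
    (C : Set (EuclideanSpace ℝ (Fin n)))
    (hconv : Convex ℝ C) (hcomp : IsCompact C)
    (D : ℝ) (hD : 0 ≤ D) (hdiam : ∀ x ∈ C, ∀ y ∈ C, ‖x - y‖ ≤ D)
    (Ω : Type*) [MeasurableSpace Ω] (ℙ : Measure Ω) [IsProbabilityMeasure ℙ]
    (ℓ : EuclideanSpace ℝ (Fin n) → Ω → ℝ)
    (gradℓ : EuclideanSpace ℝ (Fin n) → Ω → EuclideanSpace ℝ (Fin n))
    (hdiff : ∀ θ ω, HasGradientAt (fun x => ℓ x ω) (gradℓ θ ω) θ)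
    (hgradmeas : Measurable fun p : EuclideanSpace ℝ (Fin n) × Ω => gradℓ p.1 p.2)
    (G : ℝ) (hGbound : ∀ θ ω, ‖gradℓ θ ω‖ ≤ G)
    (hint : ∀ θ, Integrable (ℓ θ) ℙ)
    (L : EuclideanSpace ℝ (Fin n) → ℝ)
    (hL : ∀ θ, L θ = ∫ ω, ℓ θ ω ∂ℙ)
    (gradL : EuclideanSpace ℝ (Fin n) → EuclideanSpace ℝ (Fin n))
    (hgradL : ∀ θ, HasGradientAt L (gradL θ) θ)
    (M : ℝ) (hM : 0 ≤ M)
    (hsmooth : ∀ x y, ‖gradL x - gradL y‖ ≤ M * ‖x - y‖)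
    (T b : ℕ) (hT : 1 ≤ T) (hb : 1 ≤ b)
    (θ0 : EuclideanSpace ℝ (Fin n)) (hθ0C : θ0 ∈ C)
    (η : ℝ) (hη0 : 0 ≤ η)
    (vsel : EuclideanSpace ℝ (Fin n) → EuclideanSpace ℝ (Fin n))
    (hvselC : ∀ y, vsel y ∈ C)
    (hvselmin : ∀ y, ∀ u ∈ C, ⟪y, vsel y⟫ ≤ ⟪y, u⟫)
    (hvselmeas : Measurable vsel)
    (gbatch : Fin T → (Fin T → Fin b → Ω) → EuclideanSpace ℝ (Fin n))
    (θit : ℕ → (Fin T → Fin b → Ω) → EuclideanSpace ℝ (Fin n))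
    (hθinit : ∀ ws, θit 0 ws = θ0)
    (hgbatch : ∀ (t : Fin T) ws,
      gbatch t ws = (b : ℝ)⁻¹ • ∑ j : Fin b, gradℓ (θit t ws) (ws t j))
    (hstep01 : ∀ (t : Fin T) ws, ‖gbatch t ws‖ * η ∈ Set.Icc (0 : ℝ) 1)
    (hrec : ∀ (t : Fin T) ws,
      θit ((t : ℕ) + 1) ws =
        θit t ws + (‖gbatch t ws‖ * η) • (vsel (gbatch t ws) - θit t ws)) :
    (∑ t : Fin T,
        ∫ ws : Fin T → Fin b → Ω,
          (‖gbatch t ws‖ * η) *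
            sSup ((fun u => ⟪u - θit t ws, -gradL (θit t ws)⟫) '' C)
          ∂(Measure.pi fun _ : Fin T => Measure.pi fun _ : Fin b => ℙ))
      ≤ (L θ0 - sInf (L '' C)) + T * D * G ^ 2 * η / Real.sqrt b
        + T * M * D ^ 2 * G ^ 2 * η ^ 2 / 2 :=
  sfw_gradient_rescaling_summed_bound_general n C hconv hcomp D hD hdiam Ω ℙ ℓ gradℓ hdiff hgradmeas
    G hGbound hint L hL gradL hgradL M hM hsmooth T b hb θ0 hθ0C η hη0 vsel hvselC hvselmin
    hvselmeas gbatch θit hθinit hgbatch hstep01 hrec
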